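/- Let a be a positive definite Hermitian 2×2 complex matrix with A = det a > 0 and 𝔸 = A + (Im a₁₂)². Fix y = (y₁, y₂) ∈ ℝ² with y ≠ 0 and μ ∈ ℝ, and write Q_w = Q(x₁ + iy₁, x₂ + iy₂) and ϱ = √((A/𝔸)Qℝ(y) + Aμ²). Then both of the following integrals over x = (x₁, x₂) ∈ ℝ² converge and: ∫_{ℝ²} [ μ/( Q_w·(Q_w+Aμ²)^{3/2} ) + 2μ/( Q_w²·(Q_w+Aμ²)^{1/2} ) − 2/( √A·Q_w² ) ] dx = −2π/( √A·√𝔸·ϱ·(ϱ + √A·μ) ), and ∫_{ℝ²} [ μ/( Q_w·(Q_w+Aμ²)^{3/2} ) + 2μ/( Q_w²·(Q_w+Aμ²)^{1/2} ) + 2/( √A·Q_w² ) ] dx = 2π/( √A·√𝔸·ϱ·(ϱ − √A·μ) ). (These are the closed forms of the integrals I_{p3} and I_{p4} used in constructing the holomorphic differentials on the negative vertex; note ϱ > √A·|μ| since y ≠ 0.) -/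

import Mathlib

/-
Completing the square in `x` and diagonalising `Qℝ`, an affine change of variables with
Jacobian `1 / √𝔸` turns `Q_w` into `|z|² + m` with `m = A Qℝ(y) / 𝔸 > 0`. In polar coordinates,
`∫ g(|z|² + m) dz = -π H(m)` for any primitive `H` of `g` vanishing at infinity. As a function
of `s = Q_w` the integrand has the primitive `-2μ / (s √(s + Aμ²)) ± 2 / (√A s)`; since
`m + Aμ² = ϱ²`, evaluating it at `m = (ϱ + √A μ)(ϱ - √A μ)` gives the closed forms.
-/

open MeasureTheory

/-- The Hermitian form `Q(w) = a₁₁|w₁|² + a₂₂|w₂|² + 2Re(a₁₂ w₁ conj(w₂))`. -/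
noncomputable def Qh (a11 a22 : ℝ) (a12 w1 w2 : ℂ) : ℝ :=
  a11 * Complex.normSq w1 + a22 * Complex.normSq w2 + 2 * (a12 * w1 * (starRingEnd ℂ) w2).re

/-- The real quadratic form `Qℝ(y) = a₁₁y₁² + 2Re(a₁₂)y₁y₂ + a₂₂y₂²`. -/
noncomputable def QR (a11 a22 : ℝ) (a12 : ℂ) (y1 y2 : ℝ) : ℝ :=
  a11 * y1 ^ 2 + 2 * a12.re * y1 * y2 + a22 * y2 ^ 2

/-- `Q_w` evaluated at `w = (x₁+iy₁, x₂+iy₂)`. -/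
noncomputable def Qw (a11 a22 : ℝ) (a12 : ℂ) (y1 y2 : ℝ) (x : ℝ × ℝ) : ℝ :=
  Qh a11 a22 a12 ((x.1 : ℂ) + (y1 : ℂ) * Complex.I) ((x.2 : ℂ) + (y2 : ℂ) * Complex.I)

/-- The distance `ϱ = √((A/𝔸)Qℝ(y₁,y₂) + Aμ²)` with `A = det a`, `𝔸 = A + (Im a₁₂)²`. -/
noncomputable def rhoH (a11 a22 : ℝ) (a12 : ℂ) (y1 y2 μ : ℝ) : ℝ :=
  Real.sqrt (((a11 * a22 - Complex.normSq a12) /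
      (a11 * a22 - Complex.normSq a12 + a12.im ^ 2)) * QR a11 a22 a12 y1 y2
    + (a11 * a22 - Complex.normSq a12) * μ ^ 2)

open Set Filter Topology

section Radial

variable {g H : ℝ → ℝ} {m C : ℝ}

lemma sq_norm_le_fst_sq_add_snd_sq (z : ℝ × ℝ) : ‖z‖ ^ 2 ≤ z.1 ^ 2 + z.2 ^ 2 := by
  rcases max_cases ‖z.1‖ ‖z.2‖ with ⟨h, _⟩ | ⟨h, _⟩ <;>
    rw [Prod.norm_def, h, Real.norm_eq_abs, sq_abs] <;> nlinarith [sq_nonneg z.1, sq_nonneg z.2]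

lemma sq_add_mem_Ici (r : ℝ) : r ^ 2 + m ∈ Ici m :=
  mem_Ici.2 (le_add_of_nonneg_left (sq_nonneg r))

lemma nonneg_of_abs_le_div_sq (hm : 0 < m) (hbound : ∀ s ∈ Ici m, |g s| ≤ C / s ^ 2) :
    0 ≤ C := by
  simpa using (le_div_iff₀ (by positivity)).1 ((abs_nonneg _).trans (hbound m self_mem_Ici))

lemma integrable_comp_sq_add_sq_add (hm : 0 < m) (hg : ContinuousOn g (Ici m))
    (hbound : ∀ s ∈ Ici m, |g s| ≤ C / s ^ 2) :
    Integrable (fun z : ℝ × ℝ => g (z.1 ^ 2 + z.2 ^ 2 + m)) := by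
  have hmem (z : ℝ × ℝ) : z.1 ^ 2 + z.2 ^ 2 + m ∈ Ici m := by
    rw [mem_Ici]; exact le_add_of_nonneg_left (by positivity)
  set k := min m 1
  have hk : 0 < k := lt_min hm one_pos
  have hdom (z : ℝ × ℝ) :
      ‖g (z.1 ^ 2 + z.2 ^ 2 + m)‖ ≤ C / k ^ 2 * (1 + ‖z‖ ^ 2) ^ (-(4:ℝ) / 2) := by
    have hlow : k * (1 + ‖z‖ ^ 2) ≤ z.1 ^ 2 + z.2 ^ 2 + m := by
      nlinarith [sq_norm_le_fst_sq_add_snd_sq z, min_le_left m 1, min_le_right m 1,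
        sq_nonneg ‖z‖]
    have hC := nonneg_of_abs_le_div_sq hm hbound
    calc ‖g (z.1 ^ 2 + z.2 ^ 2 + m)‖ ≤ C / (z.1 ^ 2 + z.2 ^ 2 + m) ^ 2 := hbound _ (hmem z)
      _ ≤ C / (k * (1 + ‖z‖ ^ 2)) ^ 2 := by gcongr
      _ = C / k ^ 2 * (1 + ‖z‖ ^ 2) ^ (-(4:ℝ) / 2) := by
        rw [show -(4:ℝ) / 2 = ((-2 : ℤ) : ℝ) by norm_num, Real.rpow_intCast, zpow_neg,
          mul_pow, ← div_div, div_eq_mul_inv]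
        norm_cast
  exact ((integrable_rpow_neg_one_add_norm_sq (E := ℝ × ℝ) (by norm_num)).const_mul
    (C / k ^ 2)).mono' (hg.comp_continuous (by fun_prop) hmem).aestronglyMeasurable
    (ae_of_all _ hdom)

lemma integrableOn_Ioi_mul_comp_sq_add (hm : 0 < m) (hg : ContinuousOn g (Ici m))
    (hbound : ∀ s ∈ Ici m, |g s| ≤ C / s ^ 2) :
    IntegrableOn (fun r : ℝ => r * g (r ^ 2 + m)) (Ioi 0) := by
  have hcont : Continuous fun r : ℝ => r * g (r ^ 2 + m) :=
    continuous_id.mul (hg.comp_continuous (by fun_prop) sq_add_mem_Ici)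
  have hC := nonneg_of_abs_le_div_sq hm hbound
  rw [← Ioc_union_Ioi_eq_Ioi zero_le_one]
  refine hcont.integrableOn_Ioc.union (Integrable.mono'
    ((integrableOn_Ioi_rpow_of_lt (by norm_num : (-3:ℝ) < -1) one_pos).const_mul C)
    hcont.aestronglyMeasurable.restrict ?_)
  filter_upwards [ae_restrict_mem measurableSet_Ioi] with r (hr : 1 < r)
  have hr0 : 0 < r := one_pos.trans hr
  calc ‖r * g (r ^ 2 + m)‖ = r * |g (r ^ 2 + m)| := by
        rw [Real.norm_eq_abs, abs_mul, abs_of_pos hr0]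
    _ ≤ r * (C / (r ^ 2 + m) ^ 2) := by gcongr; exact hbound _ (sq_add_mem_Ici r)
    _ ≤ r * (C / (r ^ 2) ^ 2) := by gcongr; linarith
    _ = C * r ^ (-3:ℝ) := by
        rw [show (-3:ℝ) = ((-3 : ℤ) : ℝ) by norm_num, Real.rpow_intCast]
        field_simp

lemma integral_Ioi_mul_comp_sq_add (hm : 0 < m) (hg : ContinuousOn g (Ici m))
    (hH : ∀ s ∈ Ici m, HasDerivAt H (g s) s) (hH0 : Tendsto H atTop (𝓝 0))
    (hbound : ∀ s ∈ Ici m, |g s| ≤ C / s ^ 2) :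
    ∫ r in Ioi 0, r * g (r ^ 2 + m) = -(H m / 2) := by
  have hderiv (r : ℝ) (_ : r ∈ Ici 0) :
      HasDerivAt (fun r => H (r ^ 2 + m) / 2) (r * g (r ^ 2 + m)) r := by
    refine (((hH _ (sq_add_mem_Ici r)).comp r
      ((hasDerivAt_pow 2 r).add_const m)).div_const 2).congr_deriv ?_
    simp only [Nat.cast_ofNat]
    ring
  have hlim : Tendsto (fun r : ℝ => H (r ^ 2 + m) / 2) atTop (𝓝 0) := by
    simpa using (hH0.comp (tendsto_atTop_add_const_right _ m
      (tendsto_pow_atTop two_ne_zero))).div_const 2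
  simpa using integral_Ioi_of_hasDerivAt_of_tendsto' hderiv
    (integrableOn_Ioi_mul_comp_sq_add hm hg hbound) hlim

lemma integral_comp_sq_add_sq_add (hm : 0 < m) (hg : ContinuousOn g (Ici m))
    (hH : ∀ s ∈ Ici m, HasDerivAt H (g s) s) (hH0 : Tendsto H atTop (𝓝 0))
    (hbound : ∀ s ∈ Ici m, |g s| ≤ C / s ^ 2) :
    ∫ z : ℝ × ℝ, g (z.1 ^ 2 + z.2 ^ 2 + m) = -Real.pi * H m := by
  rw [← integral_comp_polarCoord_symm, polarCoord_target, Measure.volume_eq_prod]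
  have hpolar (p : ℝ × ℝ) :
      p.1 • g ((polarCoord.symm p).1 ^ 2 + (polarCoord.symm p).2 ^ 2 + m)
        = p.1 * g (p.1 ^ 2 + m) * 1 := by
    simp only [polarCoord_symm_apply, smul_eq_mul, mul_one, mul_pow,
      ← mul_add, Real.cos_sq_add_sin_sq]
  simp_rw [hpolar]
  rw [setIntegral_prod_mul (fun r : ℝ => r * g (r ^ 2 + m)) (fun _ : ℝ => (1:ℝ)),
    integral_Ioi_mul_comp_sq_add hm hg hH hH0 hbound]
  simp [Real.pi_pos.le]
  ring

end Radial

section AffineChange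

variable {E F : Type*} [NormedAddCommGroup E] [NormedSpace ℝ E] [FiniteDimensional ℝ E]
  [NormedAddCommGroup F] [NormedSpace ℝ F]

lemma image_univ_clm_add_const {L : E →L[ℝ] E} (hL : L.det ≠ 0) (v : E) :
    (fun z => L z + v) '' univ = univ := by
  rw [image_univ, range_eq_univ]
  intro x
  obtain ⟨z, hz⟩ := (L.toContinuousLinearEquivOfDetNeZero hL).surjective (x - v)
  exact ⟨z, by simpa using congrArg (· + v) hz⟩

lemma injOn_clm_add_const {L : E →L[ℝ] E} (hL : L.det ≠ 0) (v : E) :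
    InjOn (fun z => L z + v) univ := fun _ _ _ _ h =>
  (L.toContinuousLinearEquivOfDetNeZero hL).injective (by simpa using h)

variable [MeasurableSpace E] [BorelSpace E] (μ : Measure E) [μ.IsAddHaarMeasure]

lemma integral_comp_clm_add_const {L : E →L[ℝ] E} (hL : L.det ≠ 0) (v : E) (f : E → F) :
    ∫ x, f x ∂μ = |L.det| • ∫ z, f (L z + v) ∂μ := by
  have := integral_image_eq_integral_abs_det_fderiv_smul μ MeasurableSet.univ
    (fun z _ => (L.hasFDerivAt.add_const v).hasFDerivWithinAt) (injOn_clm_add_const hL v) f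
  rwa [image_univ_clm_add_const hL, setIntegral_univ, setIntegral_univ, integral_smul] at this

lemma Integrable.of_comp_clm_add_const {L : E →L[ℝ] E} (hL : L.det ≠ 0) {v : E} {f : E → F}
    (hf : Integrable (fun z => f (L z + v)) μ) : Integrable f μ := by
  have := integrableOn_image_iff_integrableOn_abs_det_fderiv_smul μ MeasurableSet.univ
    (fun z _ => (L.hasFDerivAt.add_const v).hasFDerivWithinAt) (injOn_clm_add_const hL v) f
  rw [image_univ_clm_add_const hL, integrableOn_univ, integrableOn_univ] at this
  exact this.2 (hf.smul |L.det|)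

end AffineChange

section QuadraticForm

variable {a11 a22 : ℝ} {a12 : ℂ}

lemma normSq_eq_re_sq_add_im_sq (z : ℂ) : Complex.normSq z = z.re ^ 2 + z.im ^ 2 := by
  rw [Complex.normSq_apply]; ring

lemma det_add_im_sq_eq :
    a11 * a22 - Complex.normSq a12 + a12.im ^ 2 = a11 * a22 - a12.re ^ 2 := by
  rw [normSq_eq_re_sq_add_im_sq]; ring

lemma mul_QR_eq (y1 y2 : ℝ) :
    a11 * QR a11 a22 a12 y1 y2 =
      (a11 * y1 + a12.re * y2) ^ 2 + (a11 * a22 - a12.re ^ 2) * y2 ^ 2 := by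
  unfold QR; ring

lemma QR_pos (ha11 : 0 < a11) (hD : 0 < a11 * a22 - a12.re ^ 2) {y1 y2 : ℝ}
    (hy : ¬(y1 = 0 ∧ y2 = 0)) : 0 < QR a11 a22 a12 y1 y2 := by
  refine pos_of_mul_pos_right (mul_QR_eq (a22 := a22) (a12 := a12) y1 y2 ▸ ?_) ha11.le
  by_cases hy2 : y2 = 0
  · have hy1 : y1 ≠ 0 := fun h => hy ⟨h, hy2⟩
    simp [hy2]; positivity
  · exact add_pos_of_nonneg_of_pos (sq_nonneg _) (mul_pos hD (by positivity))

lemma Qw_eq_QR_add (hD : a11 * a22 - a12.re ^ 2 ≠ 0) (y1 y2 : ℝ) (x : ℝ × ℝ) :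
    Qw a11 a22 a12 y1 y2 x =
      QR a11 a22 a12 (x.1 + a12.im / (a11 * a22 - a12.re ^ 2) * (a22 * y2 + a12.re * y1))
        (x.2 - a12.im / (a11 * a22 - a12.re ^ 2) * (a12.re * y2 + a11 * y1)) +
      (a11 * a22 - Complex.normSq a12) * QR a11 a22 a12 y1 y2 / (a11 * a22 - a12.re ^ 2) := by
  simp only [Qw, Qh, QR, normSq_eq_re_sq_add_im_sq, Complex.add_re, Complex.add_im,
    Complex.mul_re, Complex.mul_im, Complex.ofReal_re, Complex.ofReal_im,
    Complex.I_re, Complex.I_im, Complex.conj_re, Complex.conj_im]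
  field_simp
  ring

lemma QR_diag {sp sD : ℝ} (hsp : sp ^ 2 = a11) (hsD : sD ^ 2 = a11 * a22 - a12.re ^ 2)
    (hsp0 : sp ≠ 0) (hsD0 : sD ≠ 0) (z : ℝ × ℝ) :
    QR a11 a22 a12 (z.1 / sp - a12.re * z.2 / (sp * sD)) (sp * z.2 / sD) = z.1 ^ 2 + z.2 ^ 2 := by
  have ha22 : a22 = (sD ^ 2 + a12.re ^ 2) / sp ^ 2 := by
    rw [hsD, hsp, sub_add_cancel, mul_div_cancel_left₀ _ (hsp ▸ pow_ne_zero 2 hsp0)]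
  rw [QR, ha22, ← hsp]
  field_simp
  ring

lemma integrable_and_integral_comp_Qw (ha11 : 0 < a11)
    (hA : 0 < a11 * a22 - Complex.normSq a12) {y1 y2 : ℝ} (hy : ¬(y1 = 0 ∧ y2 = 0))
    {g H : ℝ → ℝ} {C : ℝ} (hg : ContinuousOn g (Ioi 0))
    (hH : ∀ s > 0, HasDerivAt H (g s) s) (hH0 : Tendsto H atTop (𝓝 0))
    (hbound : ∀ s > 0, |g s| ≤ C / s ^ 2) :
    Integrable (fun x => g (Qw a11 a22 a12 y1 y2 x)) ∧
      ∫ x, g (Qw a11 a22 a12 y1 y2 x) =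
        -(Real.pi / √(a11 * a22 - Complex.normSq a12 + a12.im ^ 2)) *
          H ((a11 * a22 - Complex.normSq a12) * QR a11 a22 a12 y1 y2 /
            (a11 * a22 - Complex.normSq a12 + a12.im ^ 2)) := by
  have hD : 0 < a11 * a22 - a12.re ^ 2 := det_add_im_sq_eq ▸ by positivity
  rw [det_add_im_sq_eq]
  set D := a11 * a22 - a12.re ^ 2
  set m := (a11 * a22 - Complex.normSq a12) * QR a11 a22 a12 y1 y2 / D
  have hm : 0 < m := div_pos (mul_pos hA (QR_pos ha11 hD hy)) hD
  set sp := √a11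
  set sD := √D
  have hsp : 0 < sp := Real.sqrt_pos.2 ha11
  have hsD : 0 < sD := Real.sqrt_pos.2 hD
  set u : ℝ × ℝ :=
    (a12.im / D * (a22 * y2 + a12.re * y1), a12.im / D * (a12.re * y2 + a11 * y1))
  -- `L` diagonalises `QR`, and the shift by `u` completes the square in `Qw`
  set L := LinearMap.toContinuousLinearMap (Matrix.toLin (Module.Basis.finTwoProd ℝ)
    (Module.Basis.finTwoProd ℝ) !![1 / sp, -a12.re / (sp * sD); 0, sp / sD])
  have hdet : L.det = 1 / sD := by
    simp only [L, LinearMap.det_toContinuousLinearMap, LinearMap.det_toLin,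
      Matrix.det_fin_two_of, mul_zero, sub_zero]
    field_simp
  have hL : L.det ≠ 0 := by rw [hdet]; positivity
  have hQ (z : ℝ × ℝ) : Qw a11 a22 a12 y1 y2 (L z + (-u.1, u.2)) = z.1 ^ 2 + z.2 ^ 2 + m := by
    rw [Qw_eq_QR_add hD.ne',
      ← QR_diag (Real.sq_sqrt ha11.le) (Real.sq_sqrt hD.le) hsp.ne' hsD.ne' z]
    refine congrArg₂ (· + ·) (congrArg₂ (QR a11 a22 a12) ?_ ?_) rfl <;>
      simp only [L, LinearMap.coe_toContinuousLinearMap', Matrix.toLin_finTwoProd_apply,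
        Prod.fst_add, Prod.snd_add, u] <;> ring
  have hmono {s : ℝ} (hs : s ∈ Ici m) : 0 < s := hm.trans_le hs
  have hgm : ContinuousOn g (Ici m) := hg.mono fun s hs => hmono hs
  refine ⟨Integrable.of_comp_clm_add_const volume hL (v := (-u.1, u.2)) ?_, ?_⟩
  · simp only [hQ]
    exact integrable_comp_sq_add_sq_add hm hgm fun s hs => hbound s (hmono hs)
  · rw [integral_comp_clm_add_const volume hL (-u.1, u.2), hdet]
    simp only [hQ]
    rw [integral_comp_sq_add_sq_add hm hgm (fun s hs => hH s (hmono hs)) hH0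
      fun s hs => hbound s (hmono hs)]
    simp only [smul_eq_mul, abs_of_pos (one_div_pos.2 hsD)]
    ring

end QuadraticForm

-- The integrand as a function of `s = Q_w`; the two integrals are the cases `κ = ∓ 2 / √A`.
noncomputable def pKernel (A μ κ s : ℝ) : ℝ :=
  μ / (s * (s + A * μ ^ 2) ^ ((3:ℝ) / 2)) + 2 * μ / (s ^ 2 * (s + A * μ ^ 2) ^ ((1:ℝ) / 2))
    + κ / s ^ 2

noncomputable def pKernelPrimitive (A μ κ s : ℝ) : ℝ :=
  -(2 * μ / (s * √(s + A * μ ^ 2))) - κ / s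

section Kernel

variable {A μ κ s ϱ : ℝ}

lemma pKernel_eq_sqrt (hs : 0 < s + A * μ ^ 2) :
    pKernel A μ κ s = μ / (s * ((s + A * μ ^ 2) * √(s + A * μ ^ 2)))
      + 2 * μ / (s ^ 2 * √(s + A * μ ^ 2)) + κ / s ^ 2 := by
  rw [pKernel, show (3:ℝ) / 2 = 1 + 1 / 2 by norm_num, Real.rpow_add hs, Real.rpow_one,
    ← Real.sqrt_eq_rpow]

lemma continuousOn_pKernel (hA : 0 ≤ A) : ContinuousOn (pKernel A μ κ) (Ioi 0) := by
  have hpos {s : ℝ} (hs : s ∈ Ioi 0) : 0 < s + A * μ ^ 2 :=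
    add_pos_of_pos_of_nonneg hs (by positivity)
  unfold pKernel
  refine ContinuousOn.add (ContinuousOn.add ?_ ?_) ?_ <;>
    refine continuousOn_const.div (Continuous.continuousOn (by fun_prop (disch := norm_num)))
      fun s hs => ?_
  · exact (mul_pos hs (Real.rpow_pos_of_pos (hpos hs) _)).ne'
  · exact (mul_pos (pow_pos hs 2) (Real.rpow_pos_of_pos (hpos hs) _)).ne'
  · exact (pow_pos hs 2).ne'

lemma hasDerivAt_pKernelPrimitive (hA : 0 ≤ A) (hs : 0 < s) :
    HasDerivAt (pKernelPrimitive A μ κ) (pKernel A μ κ s) s := by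
  have hc : 0 < s + A * μ ^ 2 := add_pos_of_pos_of_nonneg hs (by positivity)
  have hw : 0 < √(s + A * μ ^ 2) := Real.sqrt_pos.2 hc
  have hden : HasDerivAt (fun x => x * √(x + A * μ ^ 2))
      (1 * √(s + A * μ ^ 2) + s * (1 / (2 * √(s + A * μ ^ 2)))) s :=
    (hasDerivAt_id' s).mul (((hasDerivAt_id' s).add_const (A * μ ^ 2)).sqrt hc.ne')
  refine ((((hasDerivAt_const s (2 * μ)).div hden (by positivity)).neg).sub
    ((hasDerivAt_const s κ).div (hasDerivAt_id' s) hs.ne')).congr_deriv ?_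
  rw [pKernel_eq_sqrt hc]
  field_simp
  linear_combination (-s * μ) * Real.sq_sqrt hc.le

lemma tendsto_pKernelPrimitive_atTop : Tendsto (pKernelPrimitive A μ κ) atTop (𝓝 0) := by
  have hsqrt : Tendsto (fun s => √(s + A * μ ^ 2)) atTop atTop :=
    Real.tendsto_sqrt_atTop.comp (tendsto_atTop_add_const_right _ _ tendsto_id)
  unfold pKernelPrimitive
  simpa using ((tendsto_const_nhds (x := 2 * μ)).div_atTop
    (tendsto_id.atTop_mul_atTop₀ hsqrt)).neg.sub
    ((tendsto_const_nhds (x := κ)).div_atTop tendsto_id)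

lemma abs_pKernel_le (hA : 0 < A) (hs : 0 < s) :
    |pKernel A μ κ s| ≤ (3 / √A + |κ|) / s ^ 2 := by
  have hc : 0 < s + A * μ ^ 2 := add_pos_of_pos_of_nonneg hs (by positivity)
  set w := √(s + A * μ ^ 2)
  have hw : 0 < w := Real.sqrt_pos.2 hc
  have hsA : 0 < √A := Real.sqrt_pos.2 hA
  -- `√A |μ| ≤ w` bounds both `μ`-terms by multiples of `1 / (√A s²)`
  have hμw : √A * |μ| ≤ w := by
    rw [← Real.sqrt_sq_eq_abs, ← Real.sqrt_mul hA.le]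
    exact Real.sqrt_le_sqrt (by linarith)
  have hμ : |μ| / w ≤ 1 / √A := (div_le_div_iff₀ hw hsA).2 (by linarith)
  calc |pKernel A μ κ s|
      = |μ / (s * ((s + A * μ ^ 2) * w)) + 2 * μ / (s ^ 2 * w) + κ / s ^ 2| := by
        rw [pKernel_eq_sqrt hc]
    _ ≤ |μ| / w / s ^ 2 + 2 * (|μ| / w) / s ^ 2 + |κ| / s ^ 2 := by
        refine (abs_add_three _ _ _).trans (add_le_add_three ?_ (le_of_eq ?_) (le_of_eq ?_))
        · rw [abs_div, abs_of_pos (by positivity : 0 < s * ((s + A * μ ^ 2) * w)), div_div]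
          exact div_le_div_of_nonneg_left (abs_nonneg _) (by positivity)
            (by nlinarith [mul_nonneg (mul_pos hs hw).le (by positivity : 0 ≤ A * μ ^ 2)])
        · rw [abs_div, abs_mul, abs_two, abs_of_pos (by positivity : 0 < s ^ 2 * w)]
          field_simp
        · rw [abs_div, abs_of_pos (by positivity : 0 < s ^ 2)]
    _ ≤ 1 / √A / s ^ 2 + 2 * (1 / √A) / s ^ 2 + |κ| / s ^ 2 := by gcongr
    _ = (3 / √A + |κ|) / s ^ 2 := by ring

lemma pKernel_neg_two_div_sqrt :
    pKernel A μ (-(2 / √A)) s = μ / (s * (s + A * μ ^ 2) ^ ((3:ℝ) / 2))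
      + 2 * μ / (s ^ 2 * (s + A * μ ^ 2) ^ ((1:ℝ) / 2)) - 2 / (√A * s ^ 2) := by
  rw [pKernel]; ring

lemma pKernel_two_div_sqrt :
    pKernel A μ (2 / √A) s = μ / (s * (s + A * μ ^ 2) ^ ((3:ℝ) / 2))
      + 2 * μ / (s ^ 2 * (s + A * μ ^ 2) ^ ((1:ℝ) / 2)) + 2 / (√A * s ^ 2) := by
  rw [pKernel]; ring

lemma abs_sqrt_mul_lt (hA : 0 ≤ A) (hϱ : 0 ≤ ϱ) (hm : 0 < ϱ ^ 2 - A * μ ^ 2) :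
    |√A * μ| < ϱ :=
  abs_lt_of_sq_lt_sq (by rw [mul_pow, Real.sq_sqrt hA]; linarith) hϱ

lemma sq_sub_eq_add_mul_sub (hA : 0 ≤ A) :
    ϱ ^ 2 - A * μ ^ 2 = (ϱ + √A * μ) * (ϱ - √A * μ) := by
  linear_combination μ ^ 2 * Real.sq_sqrt hA

lemma pKernelPrimitive_neg_two_div_sqrt (hA : 0 < A) (hϱ : 0 < ϱ)
    (hm : 0 < ϱ ^ 2 - A * μ ^ 2) :
    pKernelPrimitive A μ (-(2 / √A)) (ϱ ^ 2 - A * μ ^ 2) =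
      2 / (√A * ϱ * (ϱ + √A * μ)) := by
  obtain ⟨hlt, hgt⟩ := abs_lt.1 (abs_sqrt_mul_lt hA.le hϱ.le hm)
  have hadd : ϱ + μ * √A ≠ 0 := by linarith
  have hsub : ϱ - μ * √A ≠ 0 := by linarith
  rw [pKernelPrimitive, sub_add_cancel, Real.sqrt_sq hϱ.le, sq_sub_eq_add_mul_sub hA.le]
  field_simp
  ring

lemma pKernelPrimitive_two_div_sqrt (hA : 0 < A) (hϱ : 0 < ϱ)
    (hm : 0 < ϱ ^ 2 - A * μ ^ 2) :
    pKernelPrimitive A μ (2 / √A) (ϱ ^ 2 - A * μ ^ 2) =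
      -(2 / (√A * ϱ * (ϱ - √A * μ))) := by
  obtain ⟨hlt, hgt⟩ := abs_lt.1 (abs_sqrt_mul_lt hA.le hϱ.le hm)
  have hadd : ϱ + μ * √A ≠ 0 := by linarith
  have hsub : ϱ - μ * √A ≠ 0 := by linarith
  rw [pKernelPrimitive, sub_add_cancel, Real.sqrt_sq hϱ.le, sq_sub_eq_add_mul_sub hA.le]
  field_simp
  ring

end Kernel

theorem statement16_general (a11 a22 : ℝ) (a12 : ℂ) (ha11 : 0 < a11)
    (hA : 0 < a11 * a22 - Complex.normSq a12) (y1 y2 μ : ℝ) (hy : ¬(y1 = 0 ∧ y2 = 0)) :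
    (Integrable (fun x : ℝ × ℝ =>
        μ / (Qw a11 a22 a12 y1 y2 x *
          (Qw a11 a22 a12 y1 y2 x + (a11 * a22 - Complex.normSq a12) * μ ^ 2) ^ ((3:ℝ)/2))
        + 2 * μ / (Qw a11 a22 a12 y1 y2 x ^ 2 *
          (Qw a11 a22 a12 y1 y2 x + (a11 * a22 - Complex.normSq a12) * μ ^ 2) ^ ((1:ℝ)/2))
        - 2 / (Real.sqrt (a11 * a22 - Complex.normSq a12) * Qw a11 a22 a12 y1 y2 x ^ 2)) ∧
      (∫ x : ℝ × ℝ,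
        (μ / (Qw a11 a22 a12 y1 y2 x *
          (Qw a11 a22 a12 y1 y2 x + (a11 * a22 - Complex.normSq a12) * μ ^ 2) ^ ((3:ℝ)/2))
        + 2 * μ / (Qw a11 a22 a12 y1 y2 x ^ 2 *
          (Qw a11 a22 a12 y1 y2 x + (a11 * a22 - Complex.normSq a12) * μ ^ 2) ^ ((1:ℝ)/2))
        - 2 / (Real.sqrt (a11 * a22 - Complex.normSq a12) * Qw a11 a22 a12 y1 y2 x ^ 2)))
        = -(2 * Real.pi) / (Real.sqrt (a11 * a22 - Complex.normSq a12) *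
            Real.sqrt (a11 * a22 - Complex.normSq a12 + a12.im ^ 2) *
            rhoH a11 a22 a12 y1 y2 μ *
            (rhoH a11 a22 a12 y1 y2 μ + Real.sqrt (a11 * a22 - Complex.normSq a12) * μ))) ∧
    (Integrable (fun x : ℝ × ℝ =>
        μ / (Qw a11 a22 a12 y1 y2 x *
          (Qw a11 a22 a12 y1 y2 x + (a11 * a22 - Complex.normSq a12) * μ ^ 2) ^ ((3:ℝ)/2))
        + 2 * μ / (Qw a11 a22 a12 y1 y2 x ^ 2 *
          (Qw a11 a22 a12 y1 y2 x + (a11 * a22 - Complex.normSq a12) * μ ^ 2) ^ ((1:ℝ)/2))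
        + 2 / (Real.sqrt (a11 * a22 - Complex.normSq a12) * Qw a11 a22 a12 y1 y2 x ^ 2)) ∧
      (∫ x : ℝ × ℝ,
        (μ / (Qw a11 a22 a12 y1 y2 x *
          (Qw a11 a22 a12 y1 y2 x + (a11 * a22 - Complex.normSq a12) * μ ^ 2) ^ ((3:ℝ)/2))
        + 2 * μ / (Qw a11 a22 a12 y1 y2 x ^ 2 *
          (Qw a11 a22 a12 y1 y2 x + (a11 * a22 - Complex.normSq a12) * μ ^ 2) ^ ((1:ℝ)/2))
        + 2 / (Real.sqrt (a11 * a22 - Complex.normSq a12) * Qw a11 a22 a12 y1 y2 x ^ 2)))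
        = 2 * Real.pi / (Real.sqrt (a11 * a22 - Complex.normSq a12) *
            Real.sqrt (a11 * a22 - Complex.normSq a12 + a12.im ^ 2) *
            rhoH a11 a22 a12 y1 y2 μ *
            (rhoH a11 a22 a12 y1 y2 μ - Real.sqrt (a11 * a22 - Complex.normSq a12) * μ))) := by
  have hI (κ : ℝ) := integrable_and_integral_comp_Qw ha11 hA hy
    (continuousOn_pKernel hA.le (μ := μ) (κ := κ))
    (fun s hs => hasDerivAt_pKernelPrimitive hA.le hs)
    tendsto_pKernelPrimitive_atTop (fun s hs => abs_pKernel_le hA hs)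
  simp only [← pKernel_neg_two_div_sqrt, ← pKernel_two_div_sqrt]
  set A := a11 * a22 - Complex.normSq a12
  set m := A * QR a11 a22 a12 y1 y2 / (A + a12.im ^ 2)
  have hm : 0 < m := div_pos (mul_pos hA (QR_pos ha11 (det_add_im_sq_eq ▸ by positivity) hy))
    (by positivity)
  have hϱ : rhoH a11 a22 a12 y1 y2 μ ^ 2 - A * μ ^ 2 = m := by
    rw [rhoH, div_mul_eq_mul_div, Real.sq_sqrt (add_nonneg hm.le (by positivity))]; ring
  set ϱ := rhoH a11 a22 a12 y1 y2 μ
  have hϱpos : 0 < ϱ := Real.sqrt_pos.2 <| by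
    rw [div_mul_eq_mul_div]; exact add_pos_of_pos_of_nonneg hm (by positivity)
  rw [← hϱ] at hI
  refine ⟨⟨(hI _).1, ?_⟩, (hI _).1, ?_⟩
  · rw [(hI _).2, pKernelPrimitive_neg_two_div_sqrt hA hϱpos (hϱ ▸ hm), neg_mul,
      div_mul_div_comm]
    ring
  · rw [(hI _).2, pKernelPrimitive_two_div_sqrt hA hϱpos (hϱ ▸ hm), neg_mul_neg,
      div_mul_div_comm]
    ring

/-- the closed forms of the integrals `I_{p3}`, `I_{p4}`:
`∫ [μ/(Q_w(Q_w+Aμ²)^{3/2}) + 2μ/(Q_w²(Q_w+Aμ²)^{1/2}) ∓ 2/(√A·Q_w²)] dx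
  = ∓2π/(√A√𝔸·ϱ·(ϱ ± √A·μ))`. -/
theorem statement16 (a11 a22 : ℝ) (a12 : ℂ) (ha11 : 0 < a11) (ha22 : 0 < a22)
    (hA : 0 < a11 * a22 - Complex.normSq a12) (y1 y2 μ : ℝ) (hy : ¬(y1 = 0 ∧ y2 = 0)) :
    (Integrable (fun x : ℝ × ℝ =>
        μ / (Qw a11 a22 a12 y1 y2 x *
          (Qw a11 a22 a12 y1 y2 x + (a11 * a22 - Complex.normSq a12) * μ ^ 2) ^ ((3:ℝ)/2))
        + 2 * μ / (Qw a11 a22 a12 y1 y2 x ^ 2 *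
          (Qw a11 a22 a12 y1 y2 x + (a11 * a22 - Complex.normSq a12) * μ ^ 2) ^ ((1:ℝ)/2))
        - 2 / (Real.sqrt (a11 * a22 - Complex.normSq a12) * Qw a11 a22 a12 y1 y2 x ^ 2)) ∧
      (∫ x : ℝ × ℝ,
        (μ / (Qw a11 a22 a12 y1 y2 x *
          (Qw a11 a22 a12 y1 y2 x + (a11 * a22 - Complex.normSq a12) * μ ^ 2) ^ ((3:ℝ)/2))
        + 2 * μ / (Qw a11 a22 a12 y1 y2 x ^ 2 *
          (Qw a11 a22 a12 y1 y2 x + (a11 * a22 - Complex.normSq a12) * μ ^ 2) ^ ((1:ℝ)/2))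
        - 2 / (Real.sqrt (a11 * a22 - Complex.normSq a12) * Qw a11 a22 a12 y1 y2 x ^ 2)))
        = -(2 * Real.pi) / (Real.sqrt (a11 * a22 - Complex.normSq a12) *
            Real.sqrt (a11 * a22 - Complex.normSq a12 + a12.im ^ 2) *
            rhoH a11 a22 a12 y1 y2 μ *
            (rhoH a11 a22 a12 y1 y2 μ + Real.sqrt (a11 * a22 - Complex.normSq a12) * μ))) ∧
    (Integrable (fun x : ℝ × ℝ =>
        μ / (Qw a11 a22 a12 y1 y2 x *
          (Qw a11 a22 a12 y1 y2 x + (a11 * a22 - Complex.normSq a12) * μ ^ 2) ^ ((3:ℝ)/2))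
        + 2 * μ / (Qw a11 a22 a12 y1 y2 x ^ 2 *
          (Qw a11 a22 a12 y1 y2 x + (a11 * a22 - Complex.normSq a12) * μ ^ 2) ^ ((1:ℝ)/2))
        + 2 / (Real.sqrt (a11 * a22 - Complex.normSq a12) * Qw a11 a22 a12 y1 y2 x ^ 2)) ∧
      (∫ x : ℝ × ℝ,
        (μ / (Qw a11 a22 a12 y1 y2 x *
          (Qw a11 a22 a12 y1 y2 x + (a11 * a22 - Complex.normSq a12) * μ ^ 2) ^ ((3:ℝ)/2))
        + 2 * μ / (Qw a11 a22 a12 y1 y2 x ^ 2 *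
          (Qw a11 a22 a12 y1 y2 x + (a11 * a22 - Complex.normSq a12) * μ ^ 2) ^ ((1:ℝ)/2))
        + 2 / (Real.sqrt (a11 * a22 - Complex.normSq a12) * Qw a11 a22 a12 y1 y2 x ^ 2)))
        = 2 * Real.pi / (Real.sqrt (a11 * a22 - Complex.normSq a12) *
            Real.sqrt (a11 * a22 - Complex.normSq a12 + a12.im ^ 2) *
            rhoH a11 a22 a12 y1 y2 μ *
            (rhoH a11 a22 a12 y1 y2 μ - Real.sqrt (a11 * a22 - Complex.normSq a12) * μ))) :=
  statement16_general a11 a22 a12 ha11 hA y1 y2 μ hy
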